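/- arXiv:1407.5951 — 7 statements merged into one kernel-verified Lean document; each statement's English description precedes it below -/
import Mathlib

section
/- Let E be a reflexive Banach space and J : E → E* a bounded linear map that is injective and antisymmetric (i.e., (Ju)(v) = -(Jv)(u) for all u, v ∈ E). Then the range of J is dense in E*. -/
/-!
A subspace of a locally convex space is dense as soon as no nonzero continuous functional
annihilates it (Hahn–Banach). By reflexivity a functional on `E*` annihilating `range J` is
evaluation at some `w ∈ E`, so `J v w = 0` for all `v`; antisymmetry turns this into `J w = 0`,
and injectivity gives `w = 0`.
-/

theorem LinearMap.eq_zero_of_forall_mem_lt {M : Type*} [AddCommGroup M] [Module ℝ M]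
    (f : M →ₗ[ℝ] ℝ) (S : Submodule ℝ M) {c : ℝ} (hc : ∀ x ∈ S, f x < c) :
    ∀ x ∈ S, f x = 0 := by
  intro x hx
  by_contra hfx
  have hbig := hc (((c + 1) / f x) • x) (S.smul_mem _ hx)
  rw [map_smul, smul_eq_mul, div_mul_cancel₀ _ hfx] at hbig
  linarith

theorem Submodule.dense_of_forall_dual_eq_zero {F : Type*} [TopologicalSpace F]
    [AddCommGroup F] [Module ℝ F] [IsTopologicalAddGroup F] [ContinuousSMul ℝ F]
    [LocallyConvexSpace ℝ F] (S : Submodule ℝ F)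
    (h : ∀ f : StrongDual ℝ F, (∀ x ∈ S, f x = 0) → f = 0) : Dense (S : Set F) := by
  rw [Submodule.dense_iff_topologicalClosure_eq_top, Submodule.eq_top_iff']
  by_contra! ⟨x, hx⟩
  obtain ⟨f, c, hlt, hgt⟩ :=
    geometric_hahn_banach_closed_point S.topologicalClosure.convex
      S.isClosed_topologicalClosure hx
  have hf : f = 0 := h f fun y hy =>
    (f : F →ₗ[ℝ] ℝ).eq_zero_of_forall_mem_lt _ hlt y (S.le_topologicalClosure hy)
  have hc := hlt 0 S.topologicalClosure.zero_mem
  simp only [hf, zero_apply] at hc hgt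
  linarith

theorem LinearMap.denseRange_of_forall_dual_eq_zero {G F : Type*} [AddCommGroup G]
    [Module ℝ G] [TopologicalSpace F] [AddCommGroup F] [Module ℝ F] [IsTopologicalAddGroup F]
    [ContinuousSMul ℝ F] [LocallyConvexSpace ℝ F] (T : G →ₗ[ℝ] F)
    (h : ∀ f : StrongDual ℝ F, (∀ x, f (T x) = 0) → f = 0) : DenseRange T := by
  rw [DenseRange, ← LinearMap.coe_range]
  exact (LinearMap.range T).dense_of_forall_dual_eq_zero fun f hf =>
    h f fun x => hf _ (LinearMap.mem_range_self T x)

theorem doubleDual_eq_zero_of_forall_apply_eq_zero {E : Type*} [NormedAddCommGroup E]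
    [NormedSpace ℝ E] (hrefl : Function.Surjective (NormedSpace.inclusionInDoubleDual ℝ E))
    (J : E →L[ℝ] StrongDual ℝ E) (hinj : Function.Injective J)
    (hanti : ∀ u v : E, J u v = - J v u) (f : StrongDual ℝ (StrongDual ℝ E))
    (hf : ∀ u, f (J u) = 0) : f = 0 := by
  obtain ⟨w, rfl⟩ := hrefl f
  have hJw : J w = 0 := by
    ext v
    rw [hanti w v, ← NormedSpace.dual_def ℝ E w (J v), hf v, neg_zero,
      zero_apply]
  rw [hinj (hJw.trans J.map_zero.symm), map_zero]

theorem stmt3_general {E : Type*} [NormedAddCommGroup E] [NormedSpace ℝ E]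
    (hrefl : Function.Surjective (NormedSpace.inclusionInDoubleDual ℝ E))
    (J : E →L[ℝ] StrongDual ℝ E)
    (hinj : Function.Injective J)
    (hanti : ∀ u v : E, J u v = - J v u) :
    Dense (Set.range fun u : E => J u) :=
  (J : E →ₗ[ℝ] StrongDual ℝ E).denseRange_of_forall_dual_eq_zero
    (doubleDual_eq_zero_of_forall_apply_eq_zero hrefl J hinj hanti)

/-- If `E` is a reflexive Banach space and `J : E → E*` is a bounded linear map that is
injective and antisymmetric, then the range of `J` is dense in `E*`. -/
theorem stmt3 {E : Type*} [NormedAddCommGroup E] [NormedSpace ℝ E] [CompleteSpace E]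
    (hrefl : Function.Surjective (NormedSpace.inclusionInDoubleDual ℝ E))
    (J : E →L[ℝ] StrongDual ℝ E)
    (hinj : Function.Injective J)
    (hanti : ∀ u v : E, J u v = - J v u) :
    Dense (Set.range fun u : E => J u) :=
  stmt3_general hrefl J hinj hanti
end

section
/- Let E be a reflexive Banach space and J : E → E* a bounded linear map that is injective, antisymmetric, and whose inverse is bounded on its range. Then J is surjective, i.e., Ran J = E*. -/
/-!
Being bounded below on a Banach space, `J` has closed range, so by Hahn–Banach it suffices that
every functional on `E*` vanishing on `Ran J` is zero. By reflexivity such a functional is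
evaluation at some `v : E`, and antisymmetry turns `(Ju) v = 0` for all `u` into `Jv = 0`.
-/

theorem Submodule.eq_top_of_isClosed_of_forall_dual_eq_zero {𝕜 F : Type*} [RCLike 𝕜]
    [NormedAddCommGroup F] [NormedSpace 𝕜 F] (p : Submodule 𝕜 F) [IsClosed (p : Set F)]
    (h : ∀ f : StrongDual 𝕜 F, (∀ y ∈ p, f y = 0) → f = 0) : p = ⊤ := by
  refine eq_top_iff.2 fun x _ ↦ (Submodule.Quotient.mk_eq_zero p).1 ?_
  refine SeparatingDual.eq_zero_of_forall_dual_eq_zero (R := 𝕜) fun g ↦ ?_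
  have hg : g.comp p.mkQL = 0 := h _ fun y hy ↦ by simp [(Submodule.Quotient.mk_eq_zero p).2 hy]
  exact congr($hg x)

theorem eq_zero_of_forall_antisymm_apply_eq_zero {𝕜 E : Type*} [RCLike 𝕜]
    [NormedAddCommGroup E] [NormedSpace 𝕜 E] {J : E →L[𝕜] StrongDual 𝕜 E}
    (hinj : Function.Injective J) (hanti : ∀ u v : E, J u v = - J v u) {v : E}
    (hv : ∀ u, J u v = 0) : v = 0 :=
  hinj <| by ext u; simp [← neg_eq_zero, ← hanti, hv]

theorem range_eq_top_of_antisymm_of_isClosed_range {𝕜 E : Type*} [RCLike 𝕜]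
    [NormedAddCommGroup E] [NormedSpace 𝕜 E]
    (hrefl : Function.Surjective (NormedSpace.inclusionInDoubleDual 𝕜 E))
    {J : E →L[𝕜] StrongDual 𝕜 E} (hinj : Function.Injective J)
    (hanti : ∀ u v : E, J u v = - J v u) (hclosed : IsClosed (Set.range J)) :
    J.range = ⊤ := by
  have : IsClosed (J.range : Set (StrongDual 𝕜 E)) := by rwa [J.coe_range]
  refine J.range.eq_top_of_isClosed_of_forall_dual_eq_zero fun f hf ↦ ?_
  obtain ⟨v, rfl⟩ := hrefl f
  have hv : v = 0 :=
    eq_zero_of_forall_antisymm_apply_eq_zero hinj hanti fun u ↦ hf (J u) ⟨u, rfl⟩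
  simp [hv]

theorem stmt4_general {E : Type*} [NormedAddCommGroup E] [NormedSpace ℝ E] [CompleteSpace E]
    (hrefl : Function.Surjective (NormedSpace.inclusionInDoubleDual ℝ E))
    (J : E →L[ℝ] StrongDual ℝ E)
    (hanti : ∀ u v : E, J u v = - J v u)
    (hbelow : ∃ c > 0, ∀ u : E, c * ‖u‖ ≤ ‖J u‖) :
    Function.Surjective J := by
  obtain ⟨K, hK⟩ := antilipschitzWith_iff_exists_mul_le_norm.2 hbelow
  have hrange := range_eq_top_of_antisymm_of_isClosed_range hrefl hK.injective hanti
    (hK.isClosed_range J.uniformContinuous)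
  exact LinearMap.range_eq_top.1 hrange

/-- If `E` is a reflexive Banach space and `J : E → E*` is a bounded linear map that is
injective, antisymmetric, and bounded below (its inverse is bounded on its range), then `J`
is surjective. -/
theorem stmt4 {E : Type*} [NormedAddCommGroup E] [NormedSpace ℝ E] [CompleteSpace E]
    (hrefl : Function.Surjective (NormedSpace.inclusionInDoubleDual ℝ E))
    (J : E →L[ℝ] StrongDual ℝ E)
    (hinj : Function.Injective J)
    (hanti : ∀ u v : E, J u v = - J v u)
    (hbelow : ∃ c > 0, ∀ u : E, c * ‖u‖ ≤ ‖J u‖) :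
    Function.Surjective J :=
  stmt4_general hrefl J hanti hbelow
end

section
/- Define E = {u ∈ L¹(ℝ) | ∫_ℝ u(x) dx = 0} and J : E → L^∞(ℝ) by (Ju)(x) = ∫_{-∞}^x u(y) dy. Then J is a bounded, injective, antisymmetric linear map but its range is not dense in L^∞(ℝ): in fact ‖Ju - 1‖_∞ ≥ 1 for every u ∈ E. -/
/-!
Boundedness is the triangle inequality for integrals. For injectivity, the sets on which `u`
integrates to zero form a Dynkin system (complements use `∫ u = 0`) containing the π-system of
half-lines `Iic a`, hence all Borel sets, so `u = 0` a.e. Antisymmetry is Fubini: the two pairings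
integrate `v x * u y` over the complementary regions `y ≤ x` and `x < y` of the plane (up to the
null diagonal), so their sum is `(∫ u) (∫ v) = 0`. Finally `Ju - 1 → -1` at `-∞`, and a function
with a limit at `-∞` has essential supremum at least the norm of that limit.
-/

open MeasureTheory Set Filter Topology

lemma abs_setIntegral_le_integral_abs {α : Type*} [MeasurableSpace α] {μ : Measure α}
    {u : α → ℝ} (hu : Integrable u μ) (s : Set α) :
    |∫ x in s, u x ∂μ| ≤ ∫ x, |u x| ∂μ :=
  abs_integral_le_integral_abs.trans
    (setIntegral_le_integral hu.abs (ae_of_all _ fun _ => abs_nonneg _))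

section Iic

variable {α E : Type*} [TopologicalSpace α] [LinearOrder α] [OrderTopology α]
  [SecondCountableTopology α] [MeasurableSpace α] [BorelSpace α] {μ : Measure α}
  [NormedAddCommGroup E] [NormedSpace ℝ E]

lemma setIntegral_eq_zero_of_forall_setIntegral_Iic_eq_zero {u : α → E} (hu : Integrable u μ)
    (h_univ : ∫ x, u x ∂μ = 0) (h_Iic : ∀ a, ∫ x in Iic a, u x ∂μ = 0) {s : Set α}
    (hs : MeasurableSet s) : ∫ x in s, u x ∂μ = 0 := by
  induction s, hs using MeasurableSpace.induction_on_inter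
    (BorelSpace.measurable_eq.trans (borel_eq_generateFrom_Iic α)) isPiSystem_Iic with
  | empty => simp
  | basic t ht =>
    obtain ⟨a, rfl⟩ := ht
    exact h_Iic a
  | compl t ht iht => rwa [← integral_add_compl ht hu, iht, zero_add] at h_univ
  | iUnion f hd hf ihf => simp [integral_iUnion hf hd hu.integrableOn, ihf]

lemma ae_eq_zero_of_forall_setIntegral_Iic_eq_zero [CompleteSpace E] {u : α → E}
    (hu : Integrable u μ)
    (h_univ : ∫ x, u x ∂μ = 0) (h_Iic : ∀ a, ∫ x in Iic a, u x ∂μ = 0) : u =ᵐ[μ] 0 :=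
  hu.ae_eq_zero_of_forall_setIntegral_eq_zero fun _ hs _ =>
    setIntegral_eq_zero_of_forall_setIntegral_Iic_eq_zero hu h_univ h_Iic hs

end Iic

lemma integral_setIntegral_prodMk_preimage_mul {α β : Type*} [MeasurableSpace α]
    [MeasurableSpace β] {μ : Measure α} {ν : Measure β} [SFinite μ] [SFinite ν]
    {u : β → ℝ} {v : α → ℝ} (hu : Integrable u ν) (hv : Integrable v μ) {S : Set (α × β)}
    (hS : MeasurableSet S) :
    ∫ x, (∫ y in Prod.mk x ⁻¹' S, u y ∂ν) * v x ∂μ = ∫ p in S, v p.1 * u p.2 ∂μ.prod ν := by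
  rw [← integral_indicator hS, integral_prod _ ((hv.mul_prod hu).indicator hS)]
  refine integral_congr_ae (ae_of_all _ fun x => ?_)
  dsimp only
  rw [← integral_mul_const, ← integral_indicator (measurable_prodMk_left hS)]
  congr 1 with y
  by_cases hy : (x, y) ∈ S <;> simp [hy, mul_comm]

lemma integral_setIntegral_Iic_mul_add_integral_setIntegral_Iic_mul {μ : Measure ℝ} [SFinite μ]
    [NullSingletonClass μ] {u v : ℝ → ℝ} (hu : Integrable u μ) (hv : Integrable v μ) :
    ∫ x, (∫ y in Iic x, u y ∂μ) * v x ∂μ + ∫ x, (∫ y in Iic x, v y ∂μ) * u x ∂μ =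
      (∫ x, v x ∂μ) * ∫ x, u x ∂μ := by
  set S : Set (ℝ × ℝ) := {p | p.2 ≤ p.1}
  have hS : MeasurableSet S := measurableSet_le measurable_snd measurable_fst
  have h_below : ∫ x, (∫ y in Iic x, u y ∂μ) * v x ∂μ = ∫ p in S, v p.1 * u p.2 ∂μ.prod μ :=
    integral_setIntegral_prodMk_preimage_mul hu hv hS
  have h_above : ∫ x, (∫ y in Iic x, v y ∂μ) * u x ∂μ = ∫ p in Sᶜ, v p.1 * u p.2 ∂μ.prod μ := by
    calc ∫ x, (∫ y in Iic x, v y ∂μ) * u x ∂μ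
        = ∫ x, (∫ y in Iio x, v y ∂μ) * u x ∂μ := by
          simp_rw [setIntegral_congr_set (Iio_ae_eq_Iic (μ := μ))]
      _ = ∫ p in {p : ℝ × ℝ | p.2 < p.1}, u p.1 * v p.2 ∂μ.prod μ :=
          integral_setIntegral_prodMk_preimage_mul hv hu
            (measurableSet_lt measurable_snd measurable_fst)
      _ = ∫ p in Prod.swap ⁻¹' Sᶜ, v p.swap.1 * u p.swap.2 ∂μ.prod μ := by
          rw [show Prod.swap ⁻¹' Sᶜ = {p : ℝ × ℝ | p.2 < p.1} by ext; simp [S]]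
          simp only [Prod.fst_swap, Prod.snd_swap, mul_comm]
      _ = ∫ p in Sᶜ, v p.1 * u p.2 ∂μ.prod μ :=
          Measure.measurePreserving_swap.setIntegral_preimage_emb
            MeasurableEquiv.prodComm.measurableEmbedding (fun p => v p.1 * u p.2) _
  rw [h_below, h_above, integral_add_compl hS (hv.mul_prod hu), integral_prod_mul]

lemma enorm_le_eLpNorm_top_of_tendsto_atBot {E : Type*} [NormedAddCommGroup E] {μ : Measure ℝ}
    [μ.IsOpenPosMeasure] {g : ℝ → E} {a : E} (hg : Tendsto g atBot (𝓝 a)) :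
    ‖a‖ₑ ≤ eLpNorm g ⊤ μ := by
  by_contra! h
  have h_ae : ∀ᵐ x ∂μ, ‖g x‖ₑ ≤ eLpNorm g ⊤ μ := by
    simpa only [eLpNorm_exponent_top] using ae_le_eLpNormEssSup
  obtain ⟨N, hN⟩ := eventually_atBot.1 (hg.enorm.eventually (lt_mem_nhds h))
  have h_null : μ (Iio N) = 0 :=
    measure_mono_null (fun x hx => not_le.2 (hN x (le_of_lt hx))) (ae_iff.1 h_ae)
  exact isOpen_Iio.measure_ne_zero μ nonempty_Iio h_null

/-- On `E = {u ∈ L¹(ℝ) : ∫ u = 0}`, the map `(Ju)(x) = ∫_{-∞}^x u(y) dy` is bounded,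
injective and antisymmetric, but its range is not dense in `L^∞(ℝ)`: indeed
`‖Ju - 1‖_∞ ≥ 1` for every `u ∈ E`. -/
theorem stmt5 :
    -- boundedness: ‖Ju‖_∞ ≤ ‖u‖_{L¹}
    (∀ u : ℝ → ℝ, Integrable u →
      ∀ x : ℝ, |∫ y in Set.Iic x, u y| ≤ ∫ y, |u y|) ∧
    -- injectivity
    (∀ u : ℝ → ℝ, Integrable u → (∫ y, u y) = 0 →
      (∀ x : ℝ, (∫ y in Set.Iic x, u y) = 0) → u =ᵐ[volume] 0) ∧
    -- antisymmetry: ∫ (Ju) v = - ∫ (Jv) u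
    (∀ u v : ℝ → ℝ, Integrable u → Integrable v →
      (∫ y, u y) = 0 → (∫ y, v y) = 0 →
      (∫ x, (∫ y in Set.Iic x, u y) * v x) = -∫ x, (∫ y in Set.Iic x, v y) * u x) ∧
    -- the range of J is not dense: ‖Ju - 1‖_∞ ≥ 1
    (∀ u : ℝ → ℝ, Integrable u → (∫ y, u y) = 0 →
      1 ≤ eLpNorm (fun x : ℝ => (∫ y in Set.Iic x, u y) - 1) ⊤ volume) := by
  refine ⟨fun u hu _ => abs_setIntegral_le_integral_abs hu _,
    fun u hu h_univ h_Iic => ae_eq_zero_of_forall_setIntegral_Iic_eq_zero hu h_univ h_Iic,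
    fun u v hu hv hu0 hv0 => ?_, fun u _ _ => ?_⟩
  · have h_sum := integral_setIntegral_Iic_mul_add_integral_setIntegral_Iic_mul hu hv
    rw [hv0, zero_mul] at h_sum
    exact eq_neg_of_add_eq_zero_left h_sum
  · simpa using enorm_le_eLpNorm_top_of_tendsto_atBot
      ((tendsto_integral_Iic_zero (μ := volume) (f := u) tendsto_id).sub_const 1)
end

section
/- Let Φ_t be a dynamical system (a flow satisfying Φ_{t+s} = Φ_t ∘ Φ_s, Φ_0 = id) on a Banach space E with a symmetry group G acting on E, and suppose L : E → ℝ is a continuous, G-invariant constant of the motion. Let O be a bounded G-orbit invariant under the flow, and suppose there exist η, c > 0 such that for all u ∈ O and v ∈ E with d(v, u) ≤ η one has L(v) - L(u) ≥ c · d(v, O)². Then every u ∈ O is orbitally stable: for all ε > 0 there exists δ > 0 such that d(v, u) ≤ δ implies d(Φ_t(v), O) ≤ ε for all t ∈ ℝ. -/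
/-- Lyapunov theorem for orbital stability: if `L` is a continuous `G`-invariant constant
of the motion which is coercive in a neighbourhood of a bounded, flow-invariant group orbit
`O`, then every point of `O` is orbitally stable. -/
theorem stmt10 {G : Type*} [Group G] {E : Type*} [NormedAddCommGroup E] [NormedSpace ℝ E]
    [MulAction G E]
    (Φ : ℝ → E → E)
    (hflow0 : ∀ v : E, Φ 0 v = v)
    (hflowadd : ∀ t s : ℝ, ∀ v : E, Φ (t + s) v = Φ t (Φ s v))
    (hcont_t : ∀ v : E, Continuous fun t : ℝ => Φ t v)
    (hcont_x : ∀ t : ℝ, Continuous (Φ t))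
    (hsym : ∀ (g : G) (t : ℝ) (v : E), Φ t (g • v) = g • Φ t v)
    (L : E → ℝ) (hLcont : Continuous L)
    (hLinv : ∀ (t : ℝ) (v : E), L (Φ t v) = L v)
    (hLG : ∀ (g : G) (v : E), L (g • v) = L v)
    (u₀ : E)
    (hbdd : Bornology.IsBounded (MulAction.orbit G u₀))
    (hOinv : ∀ t : ℝ, ∀ v ∈ MulAction.orbit G u₀, Φ t v ∈ MulAction.orbit G u₀)
    (η c : ℝ) (hη : 0 < η) (hc : 0 < c)
    (hcoer : ∀ u ∈ MulAction.orbit G u₀, ∀ v : E, dist v u ≤ η →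
      c * Metric.infDist v (MulAction.orbit G u₀) ^ 2 ≤ L v - L u) :
    ∀ u ∈ MulAction.orbit G u₀, ∀ ε > 0, ∃ δ > 0, ∀ v : E, dist v u ≤ δ →
      ∀ t : ℝ, Metric.infDist (Φ t v) (MulAction.orbit G u₀) ≤ ε := by
  intro u hu ε hε
  set O := MulAction.orbit G u₀ with hO
  have hOne : O.Nonempty := ⟨u₀, MulAction.mem_orbit_self u₀⟩
  have hLO : ∀ w ∈ O, L w = L u₀ := by
    rintro w ⟨g, rfl⟩; exact hLG g u₀
  set ε' := min ε (η / 2) with hε'def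
  have hε'pos : 0 < ε' := lt_min hε (by linarith)
  have hε'η : ε' < η := lt_of_le_of_lt (min_le_right _ _) (by linarith)
  have hε'ε : ε' ≤ ε := min_le_left _ _
  obtain ⟨δ₁, hδ₁pos, hδ₁⟩ :=
    Metric.continuous_iff.mp hLcont u (c * ε' ^ 2) (by positivity)
  refine ⟨min (δ₁ / 2) ε', lt_min (by linarith) hε'pos, ?_⟩
  intro v hv t
  have hLv : L v - L u₀ < c * ε' ^ 2 := by
    have h1 : dist (L v) (L u) < c * ε' ^ 2 :=
      hδ₁ v (lt_of_le_of_lt (le_trans hv (min_le_left _ _)) (by linarith))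
    rw [Real.dist_eq] at h1
    have := abs_lt.mp h1
    rw [hLO u hu] at this
    linarith [this.1, this.2]
  -- key: the inequality is self-improving
  have key : ∀ s : ℝ, Metric.infDist (Φ s v) O ≤ ε' → Metric.infDist (Φ s v) O < ε' := by
    intro s hs
    obtain ⟨w, hw, hdw⟩ := (Metric.infDist_lt_iff hOne).mp (lt_of_le_of_lt hs hε'η)
    have hco := hcoer w hw (Φ s v) hdw.le
    rw [hLinv, hLO w hw] at hco
    have h2 : Metric.infDist (Φ s v) O ^ 2 < ε' ^ 2 := by
      have := lt_of_le_of_lt hco hLv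
      exact lt_of_mul_lt_mul_left this hc.le
    nlinarith [Metric.infDist_nonneg (x := Φ s v) (s := O)]
  have hfcont : Continuous fun s : ℝ => Metric.infDist (Φ s v) O :=
    (Metric.continuous_infDist_pt O).comp (hcont_t v)
  have hSeq : {s : ℝ | Metric.infDist (Φ s v) O ≤ ε'}
      = {s : ℝ | Metric.infDist (Φ s v) O < ε'} := by
    ext s
    simp only [Set.mem_setOf_eq]
    exact ⟨fun h => key s h, fun h => le_of_lt h⟩
  have hclopen : IsClopen {s : ℝ | Metric.infDist (Φ s v) O ≤ ε'} := by
    constructor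
    · exact isClosed_le hfcont continuous_const
    · rw [hSeq]; exact isOpen_lt hfcont continuous_const
  have h0 : (0 : ℝ) ∈ {s : ℝ | Metric.infDist (Φ s v) O ≤ ε'} := by
    show Metric.infDist (Φ 0 v) O ≤ ε'
    rw [hflow0]
    calc Metric.infDist v O ≤ dist v u := Metric.infDist_le_dist_of_mem hu
      _ ≤ min (δ₁ / 2) ε' := hv
      _ ≤ ε' := min_le_right _ _
  have huniv := hclopen.eq_univ ⟨0, h0⟩
  have ht : t ∈ {s : ℝ | Metric.infDist (Φ s v) O ≤ ε'} := by
    rw [huniv]; trivial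
  exact le_trans ht hε'ε
end

section
/- Let E be a real vector space with a continuous inner product ⟨·,·⟩, G a group acting on E by linear maps preserving ⟨·,·⟩, u ∈ E, and O = {Φ_g(u) : g ∈ G} its orbit. Suppose for each g the action is differentiable in the group direction through C¹-curves, so tangent spaces T_w O are defined. Let V be a compact symmetric set of group elements with conjugation-invariance gVg⁻¹ = V, and suppose R_V(u) := min{d_s(Φ_g(u), u) : g ∈ ∂V} > 0, where d_s is the distance induced by the inner product. Then for any v ∈ E with d(v, O) < R_V(u)/3, there exists w ∈ O such that ⟨w - v, y⟩ = 0 for all y ∈ T_w O. -/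
/-!
Pick an orbit point `g₁ • u` within `R/3` of `v` and minimise `g ↦ B(x_g - v, x_g - v)`, where
`x_g = (g₁ * g) • u`, over the compact set `closure V`. For `g ∈ ∂V` the point `x_g` is at
`B`-distance `≥ R` from `x_1 = g₁ • u`, so by the parallelogram inequality it is farther from `v`
than `x_1`; hence the minimiser `g₀` lies in the open set `V`. Since
`x_{g₁⁻¹ (oneParam ξ t) g₁ g₀} = oneParam ξ t • x_{g₀}` and that group element stays in `V` for
small `t`, the function `t ↦ B(oneParam ξ t • w - v, oneParam ξ t • w - v)` with `w = x_{g₀}` has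
a local minimum at `0`, so its derivative `2 B(w - v, y)` vanishes.
-/

theorem exists_continuousBilin_eq_of_abs_le {E : Type*} [NormedAddCommGroup E] [NormedSpace ℝ E]
    (B : E → E → ℝ)
    (hadd : ∀ u v w : E, B (u + v) w = B u w + B v w)
    (hsmul : ∀ (a : ℝ) (u w : E), B (a • u) w = a * B u w)
    (hsymm : ∀ u v : E, B u v = B v u)
    (hbound : ∀ u v : E, |B u v| ≤ ‖u‖ * ‖v‖) :
    ∃ b : E →L[ℝ] E →L[ℝ] ℝ, ∀ x y, b x y = B x y :=
  ⟨(LinearMap.mk₂ ℝ B hadd hsmul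
      (fun u v w => by rw [hsymm u (v + w), hadd, hsymm v, hsymm w])
      (fun a u w => by rw [hsymm u (a • w), hsmul, hsymm w, smul_eq_mul])).mkContinuous₂ 1
      (fun x y => by simpa using hbound x y),
    fun _ _ => rfl⟩

namespace ContinuousLinearMap

variable {E : Type*} [NormedAddCommGroup E] [NormedSpace ℝ E] (b : E →L[ℝ] E →L[ℝ] ℝ)

theorem apply_self_add_le (hnonneg : ∀ x, 0 ≤ b x x) (x y : E) :
    b (x + y) (x + y) ≤ 2 * (b x x + b y y) := by
  have := hnonneg (x - y)
  simp only [map_add, map_sub, add_apply, sub_apply] at this ⊢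
  linarith

theorem apply_self_map_sub_map {f : E → E} (hf : ∀ x y, b (f x) (f y) = b x y) (x y : E) :
    b (f x - f y) (f x - f y) = b (x - y) (x - y) := by
  simp only [map_sub, sub_apply, hf]

theorem apply_self_sub_lt_of_le_apply_self_sub (hnonneg : ∀ x, 0 ≤ b x x) {R : ℝ} {x y z : E}
    (hxy : R ^ 2 ≤ b (x - y) (x - y))
    (hyz : b (y - z) (y - z) < (R / 3) ^ 2) :
    b (y - z) (y - z) < b (x - z) (x - z) := by
  have hsum := b.apply_self_add_le hnonneg (x - z) (z - y)
  have hneg : b (z - y) (z - y) = b (y - z) (y - z) := by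
    rw [← neg_sub y z]
    simp only [map_neg, neg_apply, neg_neg]
  rw [sub_add_sub_cancel, hneg] at hsum
  nlinarith

end ContinuousLinearMap

theorem IsLocalMin.apply_self_eq_zero_of_hasDerivAt {E : Type*} [NormedAddCommGroup E]
    [NormedSpace ℝ E] {b : E →L[ℝ] E →L[ℝ] ℝ} (hsymm : ∀ x y, b x y = b y x) {c : ℝ → E} {y : E}
    {t₀ : ℝ} (hmin : IsLocalMin (fun t => b (c t) (c t)) t₀) (hc : HasDerivAt c y t₀) :
    b (c t₀) y = 0 := by
  have := hmin.hasDerivAt_eq_zero (b.hasDerivAt_of_bilinear (fun _ => hc) (fun _ => hc))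
  rw [hsymm y] at this
  linarith

theorem exists_mem_isMinOn_closure_of_lt_frontier {X : Type*} [TopologicalSpace X] {V : Set X}
    (hVopen : IsOpen V) (hVcpt : IsCompact (closure V)) {x₀ : X} (hx₀ : x₀ ∈ V) {f : X → ℝ}
    (hf : Continuous f) (hfrontier : ∀ x ∈ frontier V, f x₀ < f x) :
    ∃ x ∈ V, IsMinOn f (closure V) x := by
  obtain ⟨x, hx, hmin⟩ := hVcpt.exists_isMinOn ⟨x₀, subset_closure hx₀⟩ hf.continuousOn
  refine ⟨x, by_contra fun hxV => ?_, hmin⟩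
  have hxfr : x ∈ frontier V := by rw [frontier, hVopen.interior_eq]; exact ⟨hx, hxV⟩
  exact (hfrontier x hxfr).not_ge (hmin (subset_closure hx₀))

theorem IsMinOn.isLocalMin_smul_of_continuous {G X β : Type*} [Group G] [TopologicalSpace G]
    [IsTopologicalGroup G] [MulAction G X] [Preorder β] {V : Set G} (hVopen : IsOpen V)
    {φ : X → β} {a g₀ : G} {x : X} (hmin : IsMinOn (fun g => φ ((a * g) • x)) (closure V) g₀)
    (hg₀ : g₀ ∈ V) {γ : ℝ → G} (hγ : Continuous γ) (hγ0 : γ 0 = 1) :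
    IsLocalMin (fun t => φ (γ t • (a * g₀) • x)) 0 := by
  have hloc : IsLocalMin (fun g => φ ((a * g) • x)) (a⁻¹ * γ 0 * a * g₀) := by
    rw [hγ0, mul_one, inv_mul_cancel, one_mul]
    exact hmin.isLocalMin (Filter.mem_of_superset (hVopen.mem_nhds hg₀) subset_closure)
  convert hloc.comp_continuous (g := fun t => a⁻¹ * γ t * a * g₀) (by fun_prop) using 2 with t
  simp only [Function.comp_apply, mul_smul, smul_inv_smul]

theorem stmt11_general {G : Type*} [Group G] [TopologicalSpace G] [IsTopologicalGroup G]
    {E : Type*} [NormedAddCommGroup E] [NormedSpace ℝ E] [MulAction G E]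
    (B : E → E → ℝ)
    (hBadd : ∀ u v w : E, B (u + v) w = B u w + B v w)
    (hBsmul : ∀ (a : ℝ) (u w : E), B (a • u) w = a * B u w)
    (hBsymm : ∀ u v : E, B u v = B v u)
    (hBpos : ∀ u : E, u ≠ 0 → 0 < B u u)
    (hBcont : ∀ u v : E, |B u v| ≤ ‖u‖ * ‖v‖)
    (hBinv : ∀ (g : G) (u v : E), B (g • u) (g • v) = B u v)
    (hact_cont : ∀ x : E, Continuous fun g : G => g • x)
    {Ξ : Type*} (oneParam : Ξ → ℝ → G)
    (hone_cont : ∀ ξ : Ξ, Continuous (oneParam ξ))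
    (hone_zero : ∀ ξ : Ξ, oneParam ξ 0 = 1)
    (u : E)
    (V : Set G) (hVopen : IsOpen V) (h1V : (1 : G) ∈ V)
    (hVcpt : IsCompact (closure V))
    (R : ℝ) (hR : 0 < R)
    (hRbd : ∀ g ∈ frontier V, R ≤ Real.sqrt (B (g • u - u) (g • u - u)))
    (v : E) (hv : Metric.infDist v (MulAction.orbit G u) < R / 3) :
    ∃ w ∈ MulAction.orbit G u,
      ∀ y : E, (∃ ξ : Ξ, HasDerivAt (fun t : ℝ => oneParam ξ t • w) y 0) →
        B (w - v) y = 0 := by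
  obtain ⟨b, hb⟩ := exists_continuousBilin_eq_of_abs_le B hBadd hBsmul hBsymm hBcont
  obtain rfl : B = fun x y => b x y := funext₂ fun x y => (hb x y).symm
  beta_reduce at *
  have hnonneg : ∀ x, 0 ≤ b x x := fun x => by
    rcases eq_or_ne x 0 with rfl | hx
    · simp
    · exact (hBpos x hx).le
  obtain ⟨_, ⟨g₁, rfl⟩, hg₁⟩ := (Metric.infDist_lt_iff ⟨u, MulAction.mem_orbit_self u⟩).1 hv
  let f : G → ℝ := fun g => b ((g₁ * g) • u - v) ((g₁ * g) • u - v)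
  have hf : Continuous f := by
    have : Continuous fun g : G => (g₁ * g) • u - v :=
      ((hact_cont u).comp (continuous_const_mul g₁)).sub continuous_const
    exact (b.continuous.comp this).clm_apply this
  have hf1 : f 1 < (R / 3) ^ 2 := by
    have : ‖g₁ • u - v‖ < R / 3 := by rwa [norm_sub_rev, ← dist_eq_norm]
    calc f 1 ≤ ‖g₁ • u - v‖ ^ 2 := by
          simpa only [f, mul_one, sq] using (le_abs_self _).trans (hBcont (g₁ • u - v) _)
      _ < (R / 3) ^ 2 := by gcongr
  have hfrontier : ∀ g ∈ frontier V, f 1 < f g := fun g hg => by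
    have hfar : R ^ 2 ≤ b ((g₁ * g) • u - g₁ • u) ((g₁ * g) • u - g₁ • u) := by
      rw [mul_smul, b.apply_self_map_sub_map (hBinv g₁)]
      exact (Real.le_sqrt hR.le (hnonneg _)).1 (hRbd g hg)
    simpa [f] using b.apply_self_sub_lt_of_le_apply_self_sub hnonneg hfar (by simpa [f] using hf1)
  obtain ⟨g₀, hg₀V, hg₀min⟩ :=
    exists_mem_isMinOn_closure_of_lt_frontier hVopen hVcpt h1V hf hfrontier
  refine ⟨(g₁ * g₀) • u, ⟨_, rfl⟩, fun y ⟨ξ, hy⟩ => ?_⟩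
  have hloc := IsMinOn.isLocalMin_smul_of_continuous (φ := fun z => b (z - v) (z - v)) hVopen
    hg₀min hg₀V (hone_cont ξ) (hone_zero ξ)
  simpa [hone_zero] using hloc.apply_self_eq_zero_of_hasDerivAt hBsymm (hy.sub_const v)

/-- Let `G` act on `E` by linear maps preserving a continuous scalar product `B` and the
norm, and let `V` be a bounded open conjugation-invariant neighbourhood of the identity
with compact closure such that `R_V(u) ≥ R > 0` on the boundary of `V`.  Then any `v`
with `d(v, O_u) < R/3` admits a point `w` on the orbit `O_u` such that `w - v` is
`B`-orthogonal to the tangent space `T_w O_u` (spanned by the generators of the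
one-parameter subgroups). -/
theorem stmt11 {G : Type*} [Group G] [TopologicalSpace G] [IsTopologicalGroup G]
    {E : Type*} [NormedAddCommGroup E] [NormedSpace ℝ E] [MulAction G E]
    (B : E → E → ℝ)
    (hBadd : ∀ u v w : E, B (u + v) w = B u w + B v w)
    (hBsmul : ∀ (a : ℝ) (u w : E), B (a • u) w = a * B u w)
    (hBsymm : ∀ u v : E, B u v = B v u)
    (hBpos : ∀ u : E, u ≠ 0 → 0 < B u u)
    (hBcont : ∀ u v : E, |B u v| ≤ ‖u‖ * ‖v‖)
    (hlin : ∀ g : G, IsLinearMap ℝ (fun x : E => g • x))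
    (hBinv : ∀ (g : G) (u v : E), B (g • u) (g • v) = B u v)
    (hnorm : ∀ (g : G) (u : E), ‖g • u‖ = ‖u‖)
    (hact_cont : ∀ x : E, Continuous fun g : G => g • x)
    {Ξ : Type*} (oneParam : Ξ → ℝ → G)
    (hone_cont : ∀ ξ : Ξ, Continuous (oneParam ξ))
    (hone_hom : ∀ (ξ : Ξ) (s t : ℝ), oneParam ξ (s + t) = oneParam ξ s * oneParam ξ t)
    (hone_zero : ∀ ξ : Ξ, oneParam ξ 0 = 1)
    (u : E)
    (V : Set G) (hVopen : IsOpen V) (h1V : (1 : G) ∈ V)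
    (hVcpt : IsCompact (closure V))
    (hVconj : ∀ g : G, (fun h => g * h * g⁻¹) '' V = V)
    (R : ℝ) (hR : 0 < R)
    (hRbd : ∀ g ∈ frontier V, R ≤ Real.sqrt (B (g • u - u) (g • u - u)))
    (v : E) (hv : Metric.infDist v (MulAction.orbit G u) < R / 3) :
    ∃ w ∈ MulAction.orbit G u,
      ∀ y : E, (∃ ξ : Ξ, HasDerivAt (fun t : ℝ => oneParam ξ t • w) y 0) →
        B (w - v) y = 0 :=
  stmt11_general B hBadd hBsmul hBsymm hBpos hBcont hBinv hact_cont oneParam hone_cont hone_zero u V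
    hVopen h1V hVcpt R hR hRbd v hv
end

section
/- Let E = H¹(𝕋_L, ℂ) and suppose 0 < 2λα² < β(2π/L)². Define Q(V) = ∫₀^L β|∂_x V|² - 2λα² (Re V)² dx. Then Q(V) ≥ c_λ ‖V‖²_{H¹} for all V ∈ E satisfying both ∫₀^L Re V dx = 0 and ∫₀^L Im V dx = 0, where c_λ = (β(2π/L)² - 2λα²)/(1 + (2π/L)²) > 0. -/
open MeasureTheory

/-!
The `n`-th Fourier coefficient of the derivative of a periodic function is `2πin/L` times that of
the function, and the zero-th coefficient of a zero-mean function vanishes, so Parseval gives the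
Poincaré–Wirtinger bound `(2π/L)² ‖V‖²_{L²} ≤ ‖V'‖²_{L²}`. Together with `(Re V)² ≤ |V|²` this
yields the coercivity estimate by elementary algebra.
-/

open Complex Set Real

theorem ContinuousOn.memLp_restrict_Ioc {E : Type*} [NormedAddCommGroup E] {a b : ℝ}
    {g : ℝ → E} (hg : ContinuousOn g (Icc a b)) (p : ENNReal) :
    MemLp g p (volume.restrict (Ioc a b)) := by
  obtain ⟨C, hC⟩ := isCompact_Icc.exists_bound_of_continuousOn hg
  refine .of_bound ((hg.mono Ioc_subset_Icc_self).aestronglyMeasurable measurableSet_Ioc) C ?_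
  exact (ae_restrict_iff' measurableSet_Ioc).2 (.of_forall fun x hx ↦ hC x (Ioc_subset_Icc_self hx))

theorem fourierCoeffOn_zero {a b : ℝ} (hab : a < b) (f : ℝ → ℂ) :
    fourierCoeffOn hab f 0 = (1 / (b - a)) • ∫ x in a..b, f x := by
  simp [fourierCoeffOn_eq_integral]

theorem fourierCoeffOn_of_hasDerivAt_of_eq {a b : ℝ} (hab : a < b) {f f' : ℝ → ℂ} {n : ℤ}
    (hn : n ≠ 0) (hf : ∀ x ∈ uIcc a b, HasDerivAt f (f' x) x)
    (hf' : IntervalIntegrable f' volume a b) (hfab : f a = f b) :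
    fourierCoeffOn hab f n = (b - a) / (2 * π * I * n) * fourierCoeffOn hab f' n := by
  rw [fourierCoeffOn_of_hasDerivAt hab hn hf hf', hfab, sub_self, mul_zero, zero_sub]
  have : (2 * π * I * n : ℂ) ≠ 0 := by simp [hn, pi_ne_zero, I_ne_zero]
  field_simp

theorem norm_fourierCoeffOn_deriv_eq {a b : ℝ} (hab : a < b) {f f' : ℝ → ℂ} {n : ℤ}
    (hn : n ≠ 0) (hf : ∀ x ∈ uIcc a b, HasDerivAt f (f' x) x)
    (hf' : IntervalIntegrable f' volume a b) (hfab : f a = f b) :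
    ‖fourierCoeffOn hab f' n‖ = 2 * π * |(n : ℝ)| / (b - a) * ‖fourierCoeffOn hab f n‖ := by
  have hn' : (0 : ℝ) < |(n : ℝ)| := by positivity
  have hba : 0 < b - a := sub_pos.2 hab
  rw [fourierCoeffOn_of_hasDerivAt_of_eq hab hn hf hf' hfab, norm_mul, norm_div]
  simp only [norm_mul, ← ofReal_sub, norm_real, Complex.norm_ofNat, norm_I, norm_intCast,
    Real.norm_eq_abs, abs_of_pos hba, abs_of_pos pi_pos]
  field_simp

theorem wirtinger_inequality {a b : ℝ} (hab : a < b) {f f' : ℝ → ℂ}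
    (hf : ∀ x ∈ uIcc a b, HasDerivAt f (f' x) x) (hf' : MemLp f' 2 (volume.restrict (Ioc a b)))
    (hfab : f a = f b) (hmean : ∫ x in a..b, f x = 0) :
    (2 * π / (b - a)) ^ 2 * ∫ x in a..b, ‖f x‖ ^ 2 ≤ ∫ x in a..b, ‖f' x‖ ^ 2 := by
  have hba : 0 < b - a := sub_pos.2 hab
  have hf'int : IntervalIntegrable f' volume a b :=
    (intervalIntegrable_iff_integrableOn_Ioc_of_le hab.le).2 (hf'.integrable one_le_two)
  have hfL2 : MemLp f 2 (volume.restrict (Ioc a b)) := by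
    refine ContinuousOn.memLp_restrict_Ioc (fun x hx ↦ ?_) 2
    exact (hf x (Icc_subset_uIcc hx)).continuousAt.continuousWithinAt
  have hcoeff : ∀ n : ℤ, (2 * π / (b - a)) ^ 2 * ‖fourierCoeffOn hab f n‖ ^ 2
      ≤ ‖fourierCoeffOn hab f' n‖ ^ 2 := by
    intro n
    rcases eq_or_ne n 0 with rfl | hn
    · rw [fourierCoeffOn_zero, hmean, smul_zero, norm_zero, zero_pow two_ne_zero, mul_zero]
      positivity
    · have hn1 : (1 : ℝ) ≤ |(n : ℝ)| := by
        rw [← Int.cast_abs]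
        exact_mod_cast Int.one_le_abs hn
      have hfreq : 2 * π / (b - a) ≤ 2 * π * |(n : ℝ)| / (b - a) :=
        div_le_div_of_nonneg_right (le_mul_of_one_le_right (by positivity) hn1) hba.le
      rw [norm_fourierCoeffOn_deriv_eq hab hn hf hf'int hfab, mul_pow]
      gcongr
  have hparseval := hasSum_le hcoeff ((hasSum_sq_fourierCoeffOn hab hfL2).mul_left _)
    (hasSum_sq_fourierCoeffOn hab hf')
  rw [smul_eq_mul, smul_eq_mul, mul_left_comm] at hparseval
  exact le_of_mul_le_mul_left hparseval (inv_pos.2 hba)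

theorem stmt18_general (L β lam α : ℝ) (hL : 0 < L)
    (h1 : 0 < 2 * lam * α ^ 2) (h2 : 2 * lam * α ^ 2 < β * (2 * Real.pi / L) ^ 2)
    (V : ℝ → ℂ) (hV : ContDiff ℝ 1 V) (hper : Function.Periodic V L)
    (hmeanRe : (∫ x in (0:ℝ)..L, (V x).re) = 0)
    (hmeanIm : (∫ x in (0:ℝ)..L, (V x).im) = 0) :
    (β * (2 * Real.pi / L) ^ 2 - 2 * lam * α ^ 2) / (1 + (2 * Real.pi / L) ^ 2) *
        (∫ x in (0:ℝ)..L, (‖deriv V x‖ ^ 2 + ‖V x‖ ^ 2))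
      ≤ ∫ x in (0:ℝ)..L, (β * ‖deriv V x‖ ^ 2 - 2 * lam * α ^ 2 * (V x).re ^ 2) := by
  have hV' : Continuous (deriv V) := hV.continuous_deriv le_rfl
  have hmean : ∫ x in (0:ℝ)..L, V x = 0 := by
    have hint := hV.continuous.intervalIntegrable (μ := volume) 0 L
    exact Complex.ext ((intervalIntegral.intervalIntegral_re hint).symm.trans hmeanRe)
      ((intervalIntegral.intervalIntegral_im hint).symm.trans hmeanIm)
  set K := (2 * π / L) ^ 2
  set c := 2 * lam * α ^ 2
  set A := ∫ x in (0:ℝ)..L, ‖deriv V x‖ ^ 2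
  set B := ∫ x in (0:ℝ)..L, ‖V x‖ ^ 2
  set R := ∫ x in (0:ℝ)..L, (V x).re ^ 2
  have hpoincare : K * B ≤ A := by
    simpa only [sub_zero] using wirtinger_inequality hL
      (fun x _ ↦ (hV.differentiable one_ne_zero x).hasDerivAt)
      (hV'.continuousOn.memLp_restrict_Ioc 2) (by simpa using (hper 0).symm) hmean
  have hVint : IntervalIntegrable (fun x ↦ ‖V x‖ ^ 2) volume 0 L := by
    apply Continuous.intervalIntegrable; fun_prop
  have hV'int : IntervalIntegrable (fun x ↦ ‖deriv V x‖ ^ 2) volume 0 L := by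
    apply Continuous.intervalIntegrable; fun_prop
  have hReint : IntervalIntegrable (fun x ↦ (V x).re ^ 2) volume 0 L := by
    apply Continuous.intervalIntegrable; fun_prop
  have hRB : R ≤ B := intervalIntegral.integral_mono_on hL.le hReint hVint fun x _ ↦ by
    rw [Complex.sq_norm, sq]; exact Complex.re_sq_le_normSq (V x)
  calc (β * K - c) / (1 + K) * ∫ x in (0:ℝ)..L, (‖deriv V x‖ ^ 2 + ‖V x‖ ^ 2)
      = (β * K - c) / (1 + K) * (A + B) := by rw [intervalIntegral.integral_add hV'int hVint]
    _ ≤ β * A - c * B := by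
      have hβ : 0 < β := pos_of_mul_pos_left (h1.trans h2) (by positivity)
      rw [div_mul_eq_mul_div, div_le_iff₀ (by positivity)]
      -- `(β A - c B)(1 + K) - (β K - c)(A + B) = (β + c)(A - K B)`
      nlinarith [mul_le_mul_of_nonneg_left hpoincare (add_pos hβ h1).le]
    _ ≤ β * A - c * R := by gcongr
    _ = ∫ x in (0:ℝ)..L, (β * ‖deriv V x‖ ^ 2 - c * (V x).re ^ 2) := by
      rw [intervalIntegral.integral_sub (hV'int.const_mul β) (hReint.const_mul c),
        intervalIntegral.integral_const_mul, intervalIntegral.integral_const_mul]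

/-- Coercivity of the Hessian of the Lyapunov function at a plane wave of the cubic NLS
on the torus of length `L`, focusing case `0 < 2λα² < β(2π/L)²`: for `V` (`L`-periodic,
`C¹`) with zero-mean real and imaginary parts,
`Q(V) = ∫₀^L β|∂ₓV|² - 2λα²(Re V)² ≥ c_λ ‖V‖²_{H¹}` with
`c_λ = (β(2π/L)² - 2λα²)/(1+(2π/L)²)`. -/
theorem stmt18 (L β lam α : ℝ) (hL : 0 < L) (hβ : 0 < β)
    (h1 : 0 < 2 * lam * α ^ 2) (h2 : 2 * lam * α ^ 2 < β * (2 * Real.pi / L) ^ 2)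
    (V : ℝ → ℂ) (hV : ContDiff ℝ 1 V) (hper : Function.Periodic V L)
    (hmeanRe : (∫ x in (0:ℝ)..L, (V x).re) = 0)
    (hmeanIm : (∫ x in (0:ℝ)..L, (V x).im) = 0) :
    (β * (2 * Real.pi / L) ^ 2 - 2 * lam * α ^ 2) / (1 + (2 * Real.pi / L) ^ 2) *
        (∫ x in (0:ℝ)..L, (‖deriv V x‖ ^ 2 + ‖V x‖ ^ 2))
      ≤ ∫ x in (0:ℝ)..L, (β * ‖deriv V x‖ ^ 2 - 2 * lam * α ^ 2 * (V x).re ^ 2) :=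
  stmt18_general L β lam α hL h1 h2 V hV hper hmeanRe hmeanIm
end

section
/- Let α ≠ 0 and E = H¹(𝕋_L, ℂ). There exists δ > 0 such that any W ∈ E with inf_{γ ∈ [0,2π)} ‖W - e^{iγ}α‖_{H¹} ≤ δ can be written as e^{iγ}W = α + V for some γ ∈ [0,2π) and V ∈ E with ∫₀^L Im V dx = 0; moreover there is C > 0 with d(W, O) ≤ ‖V‖ ≤ C d(W, O), where O = {e^{iγ}α : γ ∈ [0,2π)} and d(W, O) = inf_γ ‖W - e^{iγ}α‖_{H¹}. -/
/-!
Multiplication by a unimodular constant is an isometry of `H¹`, so the distance from `W` to the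
orbit of `α` is the least value of `‖c W - α‖_{H¹}` over `|c| = 1`. Expanding the square,
`‖c W - α‖² = ‖W‖² + α² L - 2 Re (c α ∫ W)`, which is least when `c α ∫ W ≥ 0`. For that
phase `V = c W - α` realises the distance (so any `δ` works, with `C = 1`), and
`α ∫ Im V = Im (c α ∫ W) = 0`.
-/

open MeasureTheory

/-- The `H¹` norm on `(0, L)` of an (`L`-periodic, `C¹`) function. -/
noncomputable def normH1 (L : ℝ) (u : ℝ → ℂ) : ℝ :=
  Real.sqrt (∫ x in (0:ℝ)..L, (‖deriv u x‖ ^ 2 + ‖u x‖ ^ 2))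

/-- The distance in `H¹` from `W` to the orbit `O = {e^{iγ} α : γ ∈ ℝ}`. -/
noncomputable def dOrb (L : ℝ) (α : ℝ) (W : ℝ → ℂ) : ℝ :=
  sInf {r : ℝ | ∃ γ : ℝ, r = normH1 L (fun x => W x - Complex.exp (Complex.I * (γ:ℂ)) * (α:ℂ))}

namespace Complex

theorem sq_norm_sub_ofReal (z : ℂ) (a : ℝ) : ‖z - a‖ ^ 2 = ‖z‖ ^ 2 - 2 * a * z.re + a ^ 2 := by
  simp only [Complex.sq_norm, normSq_apply, sub_re, sub_im, ofReal_re, ofReal_im, sub_zero]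
  ring

theorem exists_exp_I_mul_eq_norm (z : ℂ) :
    ∃ γ ∈ Set.Ico 0 (2 * Real.pi), exp (I * γ) * z = ‖z‖ := by
  set n := toIcoDiv Real.two_pi_pos 0 (-arg z)
  have hγ : toIcoMod Real.two_pi_pos 0 (-arg z) = -arg z - n * (2 * Real.pi) := by
    rw [eq_sub_iff_add_eq, ← zsmul_eq_mul, toIcoMod_add_toIcoDiv_zsmul]
  refine ⟨_, toIcoMod_mem_Ico' Real.two_pi_pos (-arg z), ?_⟩
  conv_lhs => rw [hγ]; arg 2; rw [← norm_mul_exp_arg_mul_I z]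
  rw [mul_left_comm, ← exp_add]
  convert mul_one (‖z‖ : ℂ) using 2
  rw [← exp_int_mul_two_pi_mul_I (-n)]
  push_cast
  ring_nf

end Complex

open Complex

theorem intervalIntegral.integral_re {f : ℝ → ℂ} {a b : ℝ} (hf : IntervalIntegrable f volume a b) :
    ∫ x in a..b, (f x).re = (∫ x in a..b, f x).re :=
  reCLM.intervalIntegral_comp_comm hf

theorem intervalIntegral.integral_im {f : ℝ → ℂ} {a b : ℝ} (hf : IntervalIntegrable f volume a b) :
    ∫ x in a..b, (f x).im = (∫ x in a..b, f x).im :=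
  imCLM.intervalIntegral_comp_comm hf

theorem normH1_const_mul (L : ℝ) {c : ℂ} (hc : ‖c‖ = 1) (u : ℝ → ℂ) :
    normH1 L (fun x => c * u x) = normH1 L u := by
  simp only [normH1, deriv_const_mul_field, norm_mul, hc, one_mul]

theorem normH1_sub_exp_I_mul (L α β : ℝ) (W : ℝ → ℂ) :
    normH1 L (fun x => W x - exp (I * β) * α) = normH1 L (fun x => exp (I * ↑(-β)) * W x - α) := by
  rw [← normH1_const_mul L (norm_exp_I_mul_ofReal (-β))]
  congr 1
  ext x
  rw [mul_sub, ← mul_assoc, ← exp_add]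
  push_cast
  simp

theorem normH1_sub_ofReal (L a : ℝ) {u : ℝ → ℂ} (hu : ContDiff ℝ 1 u) :
    normH1 L (fun x => u x - a) = √((∫ x in (0:ℝ)..L, (‖deriv u x‖ ^ 2 + ‖u x‖ ^ 2))
      - 2 * a * (∫ x in (0:ℝ)..L, u x).re + a ^ 2 * L) := by
  have hE : Continuous fun x => ‖deriv u x‖ ^ 2 + ‖u x‖ ^ 2 :=
    ((hu.continuous_deriv le_rfl).norm.pow 2).add (hu.continuous.norm.pow 2)
  have hre : Continuous fun x => 2 * a * (u x).re :=
    continuous_const.mul (continuous_re.comp hu.continuous)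
  have hpt (x : ℝ) : ‖deriv u x‖ ^ 2 + (‖u x‖ ^ 2 - 2 * a * (u x).re + a ^ 2)
      = (‖deriv u x‖ ^ 2 + ‖u x‖ ^ 2 - 2 * a * (u x).re) + a ^ 2 := by ring
  simp only [normH1, deriv_sub_const, sq_norm_sub_ofReal, hpt]
  rw [intervalIntegral.integral_add ((hE.fun_sub hre).intervalIntegrable _ _) intervalIntegrable_const,
    intervalIntegral.integral_sub (hE.intervalIntegrable _ _) (hre.intervalIntegrable _ _),
    intervalIntegral.integral_const_mul,
    intervalIntegral.integral_re (hu.continuous.intervalIntegrable _ _)]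
  simp [mul_comm]

theorem normH1_mul_sub_ofReal (L a : ℝ) {W : ℝ → ℂ} (hW : ContDiff ℝ 1 W) {c : ℂ}
    (hc : ‖c‖ = 1) :
    normH1 L (fun x => c * W x - a) = √((∫ x in (0:ℝ)..L, (‖deriv W x‖ ^ 2 + ‖W x‖ ^ 2))
      - 2 * (c * (a * ∫ x in (0:ℝ)..L, W x)).re + a ^ 2 * L) := by
  rw [normH1_sub_ofReal L a (contDiff_const.mul hW)]
  simp only [deriv_const_mul_field, norm_mul, hc, one_mul, intervalIntegral.integral_const_mul]
  rw [mul_left_comm, re_ofReal_mul, mul_assoc]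

theorem normH1_mul_sub_ofReal_le (L a : ℝ) {W : ℝ → ℂ} (hW : ContDiff ℝ 1 W) {c₀ c : ℂ}
    (hc₀ : ‖c₀‖ = 1) (hc : ‖c‖ = 1)
    (hc₀W : c₀ * (a * ∫ x in (0:ℝ)..L, W x) = ‖a * ∫ x in (0:ℝ)..L, W x‖) :
    normH1 L (fun x => c₀ * W x - a) ≤ normH1 L (fun x => c * W x - a) := by
  rw [normH1_mul_sub_ofReal L a hW hc₀, normH1_mul_sub_ofReal L a hW hc, hc₀W, ofReal_re]
  have : (c * (a * ∫ x in (0:ℝ)..L, W x)).re ≤ ‖a * ∫ x in (0:ℝ)..L, W x‖ := by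
    simpa [hc] using re_le_norm (c * (a * ∫ x in (0:ℝ)..L, W x))
  gcongr

theorem stmt19_general (L α : ℝ) (hα : α ≠ 0) :
    ∃ δ > 0, ∃ C > 0, ∀ W : ℝ → ℂ, ContDiff ℝ 1 W → Function.Periodic W L →
      dOrb L α W ≤ δ →
      ∃ γ : ℝ, 0 ≤ γ ∧ γ < 2 * Real.pi ∧
        ∃ V : ℝ → ℂ,
          (∀ x : ℝ, Complex.exp (Complex.I * (γ:ℂ)) * W x = (α:ℂ) + V x) ∧
          (∫ x in (0:ℝ)..L, (V x).im) = 0 ∧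
          dOrb L α W ≤ normH1 L V ∧ normH1 L V ≤ C * dOrb L α W := by
  refine ⟨1, one_pos, 1, one_pos, fun W hW _ _ => ?_⟩
  obtain ⟨γ, ⟨hγ₀, hγ₂π⟩, hγ⟩ := exists_exp_I_mul_eq_norm (α * ∫ x in (0:ℝ)..L, W x)
  set V : ℝ → ℂ := fun x => exp (I * γ) * W x - α
  have hmin : IsLeast {r : ℝ | ∃ β : ℝ, r = normH1 L (fun x => W x - exp (I * β) * α)}
      (normH1 L V) := by
    refine ⟨⟨-γ, by rw [normH1_sub_exp_I_mul, neg_neg]⟩, ?_⟩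
    rintro _ ⟨β, rfl⟩
    rw [normH1_sub_exp_I_mul]
    exact normH1_mul_sub_ofReal_le L α hW (norm_exp_I_mul_ofReal γ) (norm_exp_I_mul_ofReal _) hγ
  have hd : dOrb L α W = normH1 L V := hmin.csInf_eq
  have hV : (∫ x in (0:ℝ)..L, (V x).im) = 0 := by
    have hint : IntervalIntegrable (fun x => exp (I * γ) * W x) volume 0 L :=
      (continuous_const.mul hW.continuous).intervalIntegrable _ _
    simp only [V, sub_im, ofReal_im, sub_zero]
    rw [intervalIntegral.integral_im hint, intervalIntegral.integral_const_mul]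
    refine (mul_eq_zero_iff_left hα).mp ?_
    rw [← im_ofReal_mul, mul_left_comm, hγ, ofReal_im]
  exact ⟨γ, hγ₀, hγ₂π, V, fun x => by ring, hV, hd.le, by rw [hd, one_mul]⟩

/-- Modulation lemma: there exists `δ > 0` such that every `W` with
`d(W, O) ≤ δ` can be written as `e^{iγ} W = α + V` with `γ ∈ [0, 2π)` and
`∫ Im V = 0`, and moreover `d(W, O) ≤ ‖V‖_{H¹} ≤ C d(W, O)` for some constant `C`. -/
theorem stmt19 (L α : ℝ) (hL : 0 < L) (hα : α ≠ 0) :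
    ∃ δ > 0, ∃ C > 0, ∀ W : ℝ → ℂ, ContDiff ℝ 1 W → Function.Periodic W L →
      dOrb L α W ≤ δ →
      ∃ γ : ℝ, 0 ≤ γ ∧ γ < 2 * Real.pi ∧
        ∃ V : ℝ → ℂ,
          (∀ x : ℝ, Complex.exp (Complex.I * (γ:ℂ)) * W x = (α:ℂ) + V x) ∧
          (∫ x in (0:ℝ)..L, (V x).im) = 0 ∧
          dOrb L α W ≤ normH1 L V ∧ normH1 L V ≤ C * dOrb L α W :=
  stmt19_general L α hα
end
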